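/- arXiv:math/0507303 — 2 statements merged into one kernel-verified Lean document; each statement's English description precedes it below -/
import Mathlib

section
/- The coefficients A^{(1)}, A^{(2)}, B, C of the two-sided conditional second moment satisfy the system: (1) 1+ρ^{2j}(1+q) = A^{(1)}(2+q) + A^{(2)}(1+ρ^{2(j+k)}(1+q)) + Bρ^{j+k}(2+q) + 1 - A^{(1)} - A^{(2)} - ρ^{j+k}B; (2) 1+ρ^{2k}(1+q) = A^{(1)}(1+ρ^{2(j+k)}(1+q)) + A^{(2)}(2+q) + Bρ^{j+k}(2+q) + 1 - A^{(1)} - A^{(2)} - ρ^{j+k}B; (3) ρ^{j+k}(2+q) = A^{(1)}ρ^{j+k}(2+q) + A^{(2)}ρ^{j+k}(2+q) + B(1+ρ^{2(j+k)}(1+q)) + ρ^{j+k}(1 - A^{(1)} - A^{(2)} - ρ^{j+k}B), where A^{(1)} = ρ^{2j}(1-ρ^{2k})(1-qρ^{2k})/((1-qρ^{2(j+k)})(1-ρ^{2(j+k)})), A^{(2)} = ρ^{2k}(1-ρ^{2j})(1-qρ^{2j})/((1-qρ^{2(j+k)})(1-ρ^{2(j+k)})), B = (q+1)ρ^{j+k}(1-ρ^{2j})(1-ρ^{2k})/((1-qρ^{2(j+k)})(1-ρ^{2(j+k)})).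 -/
lemma mul_ne_one_of_le_one_of_lt_one {q x : ℝ} (hq : q ≤ 1) (hx0 : 0 ≤ x) (hx1 : x < 1) :
    q * x ≠ 1 :=
  ((mul_le_of_le_one_left hx0 hq).trans_lt hx1).ne

lemma pow_two_mul_lt_one {ρ : ℝ} (hρ : |ρ| < 1) {n : ℕ} (hn : n ≠ 0) : ρ ^ (2 * n) < 1 := by
  rw [pow_mul]
  exact pow_lt_one₀ (sq_nonneg ρ) ((sq_lt_one_iff_abs_lt_one ρ).2 hρ) hn

theorem coefficients_solve_moment_system_general (ρ q : ℝ) (j k : ℕ)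
    (hρ1 : |ρ| < 1) (hq1 : q ≤ 1)
    (hj : 1 ≤ j) :
    (fun A1 A2 B =>
      (1 + ρ ^ (2 * j) * (1 + q) =
          A1 * (2 + q) + A2 * (1 + ρ ^ (2 * (j + k)) * (1 + q)) +
            B * ρ ^ (j + k) * (2 + q) + 1 - A1 - A2 - ρ ^ (j + k) * B) ∧
      (1 + ρ ^ (2 * k) * (1 + q) =
          A1 * (1 + ρ ^ (2 * (j + k)) * (1 + q)) + A2 * (2 + q) +
            B * ρ ^ (j + k) * (2 + q) + 1 - A1 - A2 - ρ ^ (j + k) * B) ∧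
      (ρ ^ (j + k) * (2 + q) =
          A1 * ρ ^ (j + k) * (2 + q) + A2 * ρ ^ (j + k) * (2 + q) +
            B * (1 + ρ ^ (2 * (j + k)) * (1 + q)) +
            ρ ^ (j + k) * (1 - A1 - A2 - ρ ^ (j + k) * B)))
      (ρ ^ (2 * j) * (1 - ρ ^ (2 * k)) * (1 - q * ρ ^ (2 * k)) /
        ((1 - q * ρ ^ (2 * (j + k))) * (1 - ρ ^ (2 * (j + k)))))
      (ρ ^ (2 * k) * (1 - ρ ^ (2 * j)) * (1 - q * ρ ^ (2 * j)) /
        ((1 - q * ρ ^ (2 * (j + k))) * (1 - ρ ^ (2 * (j + k)))))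
      ((q + 1) * ρ ^ (j + k) * (1 - ρ ^ (2 * j)) * (1 - ρ ^ (2 * k)) /
        ((1 - q * ρ ^ (2 * (j + k))) * (1 - ρ ^ (2 * (j + k))))) := by
  have hx0 : 0 ≤ ρ ^ (2 * (j + k)) := (even_two_mul (j + k)).pow_nonneg ρ
  have hx1 : ρ ^ (2 * (j + k)) < 1 := pow_two_mul_lt_one hρ1 (by omega)
  have hden : 1 - ρ ^ (2 * (j + k)) ≠ 0 := sub_ne_zero.2 hx1.ne'
  have hden_q : 1 - q * ρ ^ (2 * (j + k)) ≠ 0 :=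
    sub_ne_zero.2 (mul_ne_one_of_le_one_of_lt_one hq1 hx0 hx1).symm
  refine ⟨?_, ?_, ?_⟩ <;> (field_simp; ring)

/-- The explicit coefficients A⁽¹⁾, A⁽²⁾, B of the two-sided conditional second
moment of a 1TSP solve the linear system of moment equations. -/
theorem coefficients_solve_moment_system (ρ q : ℝ) (j k : ℕ)
    (hρ0 : 0 < |ρ|) (hρ1 : |ρ| < 1) (hq : -1 < q) (hq1 : q ≤ 1)
    (hj : 1 ≤ j) (hk : 1 ≤ k) :
    (fun A1 A2 B =>
      (1 + ρ ^ (2 * j) * (1 + q) =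
          A1 * (2 + q) + A2 * (1 + ρ ^ (2 * (j + k)) * (1 + q)) +
            B * ρ ^ (j + k) * (2 + q) + 1 - A1 - A2 - ρ ^ (j + k) * B) ∧
      (1 + ρ ^ (2 * k) * (1 + q) =
          A1 * (1 + ρ ^ (2 * (j + k)) * (1 + q)) + A2 * (2 + q) +
            B * ρ ^ (j + k) * (2 + q) + 1 - A1 - A2 - ρ ^ (j + k) * B) ∧
      (ρ ^ (j + k) * (2 + q) =
          A1 * ρ ^ (j + k) * (2 + q) + A2 * ρ ^ (j + k) * (2 + q) +
            B * (1 + ρ ^ (2 * (j + k)) * (1 + q)) +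
            ρ ^ (j + k) * (1 - A1 - A2 - ρ ^ (j + k) * B)))
      (ρ ^ (2 * j) * (1 - ρ ^ (2 * k)) * (1 - q * ρ ^ (2 * k)) /
        ((1 - q * ρ ^ (2 * (j + k))) * (1 - ρ ^ (2 * (j + k)))))
      (ρ ^ (2 * k) * (1 - ρ ^ (2 * j)) * (1 - q * ρ ^ (2 * j)) /
        ((1 - q * ρ ^ (2 * (j + k))) * (1 - ρ ^ (2 * (j + k)))))
      ((q + 1) * ρ ^ (j + k) * (1 - ρ ^ (2 * j)) * (1 - ρ ^ (2 * k)) /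
        ((1 - q * ρ ^ (2 * (j + k))) * (1 - ρ ^ (2 * (j + k))))) :=
  coefficients_solve_moment_system_general ρ q j k hρ1 hq1 hj
end

section
/- For |q| < 1, the q-Hermite polynomials satisfy the sup-bound max_{x ∈ S(q)} |H_n(x|q)| ≤ W_n(q)/(1-q)^{n/2}, where W_n(q) = Σ_{i=0}^n [n choose i]_q is the sum of Gaussian binomial coefficients and S(q) = [-2/√(1-q), 2/√(1-q)]. -/
noncomputable section

/-- The q-integer [n]_q = 1 + q + ⋯ + q^{n-1}. -/
def qInt (q : ℝ) (n : ℕ) : ℝ := ∑ i ∈ Finset.range n, q ^ i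

/-- The q-factorial [n]_q! = ∏_{i=1}^n [i]_q. -/
def qFactorial (q : ℝ) : ℕ → ℝ
  | 0 => 1
  | n + 1 => qFactorial q n * qInt q (n + 1)

/-- The Gaussian binomial coefficient [n choose k]_q. -/
def qBinom (q : ℝ) (n k : ℕ) : ℝ := qFactorial q n / (qFactorial q k * qFactorial q (n - k))

/-- W_n(q) = Σ_{i=0}^n [n choose i]_q. -/
def W (q : ℝ) (n : ℕ) : ℝ := ∑ i ∈ Finset.range (n + 1), qBinom q n i

/-- The q-Hermite polynomials. -/
def qHermite (q : ℝ) : ℕ → ℝ → ℝ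
  | 0, _ => 1
  | 1, x => x
  | n + 2, x => x * qHermite q (n + 1) x - qInt q (n + 1) * qHermite q n x

/-!
Put `s = √(1 - q)` and write `x s = z + w` with `z = e^{iθ}`, `w = e^{-iθ}`. Then `s^n H_n(x|q)`
is the homogeneous Rogers–Szegő polynomial `∑ₖ [n k]_q z^{n-k} w^k`: the q-Pascal rule gives it
the three-term recurrence `R_{n+2} = (z + w) R_{n+1} - (1 - q^{n+1}) z w R_n`, which for `z w = 1`
is the rescaled recurrence of `H_n`. As `|z| = |w| = 1` and the q-binomials are nonnegative
for `q > -1`, the triangle inequality bounds it by `W_n(q)`.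
-/

open Finset ComplexConjugate

lemma one_sub_mul_qInt (q : ℝ) (n : ℕ) : (1 - q) * qInt q n = 1 - q ^ n := by
  rw [qInt, mul_comm, geom_sum_mul_neg]

lemma qInt_pos {q : ℝ} (hq : -1 < q) {n : ℕ} (hn : 0 < n) : 0 < qInt q n := by
  rcases lt_or_ge q 1 with hq1 | hq1
  · have hpow : q ^ n < 1 := (le_abs_self _).trans_lt <| by
      rw [abs_pow]; exact pow_lt_one₀ (abs_nonneg q) (abs_lt.2 ⟨hq, hq1⟩) hn.ne'
    have := one_sub_mul_qInt q n
    nlinarith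
  · obtain ⟨m, rfl⟩ : ∃ m, n = m + 1 := ⟨n - 1, by omega⟩
    rw [qInt, sum_range_succ']
    have : 0 ≤ ∑ i ∈ range m, q ^ (i + 1) := sum_nonneg fun i _ => by positivity
    simp only [pow_zero]
    linarith

lemma qFactorial_pos {q : ℝ} (hq : -1 < q) (n : ℕ) : 0 < qFactorial q n := by
  induction n with
  | zero => exact one_pos
  | succ n ih => exact mul_pos ih (qInt_pos hq n.succ_pos)

lemma qBinom_nonneg {q : ℝ} (hq : -1 < q) (n k : ℕ) : 0 ≤ qBinom q n k := by
  have h₁ := qFactorial_pos hq n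
  have h₂ := qFactorial_pos hq k
  have h₃ := qFactorial_pos hq (n - k)
  unfold qBinom
  positivity

lemma qBinom_zero_right {q : ℝ} (hq : -1 < q) (n : ℕ) : qBinom q n 0 = 1 := by
  simp [qBinom, qFactorial, (qFactorial_pos hq n).ne']

lemma qBinom_self {q : ℝ} (hq : -1 < q) (n : ℕ) : qBinom q n n = 1 := by
  simp [qBinom, qFactorial, (qFactorial_pos hq n).ne']

lemma qInt_add (q : ℝ) (a b : ℕ) : qInt q (a + b) = qInt q a + q ^ a * qInt q b := by
  simp only [qInt, sum_range_add, mul_sum, pow_add]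

lemma qBinom_succ_succ {q : ℝ} (hq : -1 < q) {n k : ℕ} (hk : k < n) :
    qBinom q (n + 1) (k + 1) = qBinom q n (k + 1) + q ^ (n - k) * qBinom q n k := by
  obtain ⟨m, rfl⟩ := Nat.exists_eq_add_of_lt hk
  have hsplit : qInt q (k + m + 1 + 1) = qInt q (m + 1) + q ^ (m + 1) * qInt q (k + 1) := by
    rw [show k + m + 1 + 1 = (m + 1) + (k + 1) by ring, qInt_add]
  have h₁ := qFactorial_pos hq k
  have h₂ := qFactorial_pos hq m
  have h₃ := qFactorial_pos hq (k + m + 1)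
  have h₄ := qInt_pos hq k.succ_pos
  have h₅ := qInt_pos hq m.succ_pos
  simp only [qBinom, show k + m + 1 + 1 - (k + 1) = m + 1 by omega,
    show k + m + 1 - (k + 1) = m by omega, show k + m + 1 - k = m + 1 by omega]
  have e₁ : qFactorial q (k + m + 1 + 1) = qFactorial q (k + m + 1) * qInt q (k + m + 1 + 1) :=
    rfl
  have e₂ : qFactorial q (k + 1) = qFactorial q k * qInt q (k + 1) := rfl
  have e₃ : qFactorial q (m + 1) = qFactorial q m * qInt q (m + 1) := rfl
  rw [e₁, e₂, e₃, hsplit]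
  field_simp

lemma one_sub_pow_mul_qBinom_succ {q : ℝ} (hq : -1 < q) {n k : ℕ} (hk : k ≤ n) :
    (1 - q ^ (n + 1 - k)) * qBinom q (n + 1) k = (1 - q ^ (n + 1)) * qBinom q n k := by
  obtain ⟨m, rfl⟩ := Nat.exists_eq_add_of_le hk
  have h₁ := qFactorial_pos hq k
  have h₂ := qFactorial_pos hq m
  have h₃ := qInt_pos hq m.succ_pos
  simp only [← one_sub_mul_qInt, qBinom, show k + m + 1 - k = m + 1 by omega,
    show k + m - k = m by omega]
  have e₁ : qFactorial q (k + m + 1) = qFactorial q (k + m) * qInt q (k + m + 1) := rfl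
  have e₂ : qFactorial q (m + 1) = qFactorial q m * qInt q (m + 1) := rfl
  rw [e₁, e₂]
  field_simp

section RogersSzego

variable {R : Type*} [CommRing R] [Algebra ℝ R]

def rogersSzego (q : ℝ) (n : ℕ) (z w : R) : R :=
  ∑ k ∈ range (n + 1), qBinom q n k • (z ^ (n - k) * w ^ k)

lemma rogersSzego_succ {q : ℝ} (hq : -1 < q) (n : ℕ) (z w : R) :
    rogersSzego q (n + 1) z w = z * rogersSzego q n z w + w * rogersSzego q n (q • z) w := by
  have pascal : ∀ k ∈ range n,
      qBinom q (n + 1) (k + 1) • (z ^ (n + 1 - (k + 1)) * w ^ (k + 1)) =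
        z * (qBinom q n (k + 1) • (z ^ (n - (k + 1)) * w ^ (k + 1))) +
          w * (qBinom q n k • ((q • z) ^ (n - k) * w ^ k)) := by
    intro k hk
    have hk := mem_range.1 hk
    rw [qBinom_succ_succ hq hk, smul_pow, Nat.add_sub_add_right,
      show n - k = n - (k + 1) + 1 by omega]
    simp only [Algebra.smul_def, map_add, map_mul, map_pow]
    ring
  rw [rogersSzego, sum_range_succ', sum_range_succ, sum_congr rfl pascal, sum_add_distrib,
    rogersSzego, rogersSzego, mul_sum, mul_sum, sum_range_succ' _ n, sum_range_succ _ n]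
  simp only [qBinom_self hq, qBinom_zero_right hq, one_smul, Nat.sub_self, Nat.sub_zero, pow_zero]
  ring

lemma rogersSzego_succ_sub {q : ℝ} (hq : -1 < q) (n : ℕ) (z w : R) :
    rogersSzego q (n + 1) z w - rogersSzego q (n + 1) (q • z) w =
      (1 - q ^ (n + 1)) • (z * rogersSzego q n z w) := by
  have shift : ∀ k ∈ range (n + 1),
      qBinom q (n + 1) k • (z ^ (n + 1 - k) * w ^ k) -
          qBinom q (n + 1) k • ((q • z) ^ (n + 1 - k) * w ^ k) =
        (1 - q ^ (n + 1)) • (z * (qBinom q n k • (z ^ (n - k) * w ^ k))) := by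
    intro k hk
    have hk := Nat.lt_succ_iff.1 (mem_range.1 hk)
    have key := congrArg (algebraMap ℝ R) (one_sub_pow_mul_qBinom_succ hq hk)
    rw [show n + 1 - k = n - k + 1 by omega] at key ⊢
    simp only [Algebra.smul_def, map_sub, map_mul, map_pow, map_one] at key ⊢
    linear_combination (z ^ (n - k + 1) * w ^ k) * key
  rw [rogersSzego, rogersSzego, ← sum_sub_distrib, sum_range_succ, sum_congr rfl shift,
    rogersSzego, mul_sum, smul_sum]
  simp only [Nat.sub_self, pow_zero, sub_self, add_zero]

lemma rogersSzego_succ_succ {q : ℝ} (hq : -1 < q) (n : ℕ) (z w : R) :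
    rogersSzego q (n + 2) z w =
      (z + w) * rogersSzego q (n + 1) z w - (1 - q ^ (n + 1)) • (z * w * rogersSzego q n z w) := by
  have h := rogersSzego_succ_sub hq n z w
  rw [rogersSzego_succ hq]
  simp only [Algebra.smul_def] at h ⊢
  linear_combination (-w) * h

lemma algebraMap_qHermite_mul_pow {q s x : ℝ}
    (hq : -1 < q) (hs : s ^ 2 = 1 - q) {z w : R} (hzw : z * w = 1)
    (hsum : z + w = algebraMap ℝ R (x * s)) (n : ℕ) :
    algebraMap ℝ R (qHermite q n x * s ^ n) = rogersSzego q n z w := by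
  induction n using Nat.twoStepInduction with
  | zero => simp [qHermite, rogersSzego, qBinom_zero_right hq]
  | one => simp [qHermite, rogersSzego, sum_range_succ, qBinom_zero_right hq, qBinom_self hq, hsum]
  | more n ih₀ ih₁ =>
    have hcoeff : qInt q (n + 1) * s ^ 2 = 1 - q ^ (n + 1) := by
      rw [hs, mul_comm, one_sub_mul_qInt]
    have hrec : qHermite q (n + 2) x * s ^ (n + 2) =
        x * s * (qHermite q (n + 1) x * s ^ (n + 1)) -
          qInt q (n + 1) * s ^ 2 * (qHermite q n x * s ^ n) := by
      rw [qHermite]; ring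
    rw [rogersSzego_succ_succ hq, hrec, hcoeff, map_sub, map_mul _ (x * s),
      map_mul _ (1 - q ^ (n + 1)), ih₀, ih₁, ← hsum, Algebra.smul_def, hzw]
    ring

end RogersSzego

lemma norm_rogersSzego_le {R : Type*} [NormedCommRing R] [NormedAlgebra ℝ R] [NormOneClass R]
    {q : ℝ} (hq : -1 < q) (n : ℕ) {z w : R} (hz : ‖z‖ ≤ 1) (hw : ‖w‖ ≤ 1) :
    ‖rogersSzego q n z w‖ ≤ W q n := by
  refine (norm_sum_le _ _).trans (sum_le_sum fun k _ => ?_)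
  rw [norm_smul, Real.norm_of_nonneg (qBinom_nonneg hq n k)]
  refine mul_le_of_le_one_right (qBinom_nonneg hq n k) ?_
  calc ‖z ^ (n - k) * w ^ k‖ ≤ ‖z‖ ^ (n - k) * ‖w‖ ^ k :=
        (norm_mul_le _ _).trans (mul_le_mul (norm_pow_le _ _) (norm_pow_le _ _) (by positivity)
          (by positivity))
    _ ≤ 1 := mul_le_one₀ (pow_le_one₀ (norm_nonneg _) hz) (by positivity)
          (pow_le_one₀ (norm_nonneg _) hw)

lemma Complex.exists_norm_eq_one_add_conj_eq {t : ℝ} (ht : |t| ≤ 2) :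
    ∃ z : ℂ, ‖z‖ = 1 ∧ z + conj z = t := by
  refine ⟨Complex.exp (Real.arccos (t / 2) * Complex.I), Complex.norm_exp_ofReal_mul_I _, ?_⟩
  obtain ⟨ht₁, ht₂⟩ := abs_le.1 ht
  rw [Complex.add_conj, Complex.exp_ofReal_mul_I_re, Real.cos_arccos (by linarith) (by linarith)]
  push_cast
  ring

/-- Sup-bound for q-Hermite polynomials on the support S(q):
|H_n(x|q)| ≤ W_n(q)/(1-q)^{n/2} for x ∈ [-2/√(1-q), 2/√(1-q)]. -/
theorem qHermite_sup_bound (q : ℝ) (hq : |q| < 1) (n : ℕ) (x : ℝ)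
    (hx : x ∈ Set.Icc (-(2 / Real.sqrt (1 - q))) (2 / Real.sqrt (1 - q))) :
    |qHermite q n x| ≤ W q n / (1 - q) ^ ((n : ℝ) / 2) := by
  obtain ⟨hq₁, hq₂⟩ := abs_lt.1 hq
  set s := √(1 - q)
  have hs : 0 < s := Real.sqrt_pos.2 (by linarith)
  have hxs : |x * s| ≤ 2 := by
    rw [abs_mul, abs_of_pos hs, ← le_div_iff₀ hs]
    exact abs_le.2 hx
  obtain ⟨z, hz, hsum⟩ := Complex.exists_norm_eq_one_add_conj_eq hxs
  have hzw : z * conj z = 1 := by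
    rw [Complex.mul_conj, Complex.normSq_eq_norm_sq, hz]; norm_num
  have hH := algebraMap_qHermite_mul_pow (by linarith) (Real.sq_sqrt (by linarith : 0 ≤ 1 - q))
    hzw hsum n
  rw [Real.rpow_div_two_eq_sqrt _ (by linarith), Real.rpow_natCast, le_div_iff₀ (by positivity)]
  calc |qHermite q n x| * s ^ n = ‖rogersSzego q n z (conj z)‖ := by
        rw [← hH, Complex.coe_algebraMap, Complex.norm_real, Real.norm_eq_abs, abs_mul,
          abs_of_pos (pow_pos hs n)]
    _ ≤ W q n := norm_rogersSzego_le (by linarith) n hz.le (by rw [Complex.norm_conj, hz])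
end
end
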